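/- arXiv:2103.09575 — 3 statements merged into one kernel-verified Lean document; each statement's English description precedes it below -/
import Mathlib

section
/- Consider a deterministic MDP with discount factor γ = 1 where every trajectory terminates in finitely many steps, the reward is 0 at every non-terminal transition, and every terminal transition yields reward either L or H with L < H. Let S be the set of states from which some trajectory achieves total reward H. If a behavior policy π_B, from every state s ∈ S, generates a trajectory with total reward H with strictly positive probability, then the greedy policy π(s) = argmax_a Q^{π_B}(s,a) (one step of policy improvement on the exact behavior value function Q^{π_B}) achieves total reward H with probability 1 from every state in S, i.e. it is optimal. -/
open scoped Classical
/-- A deterministic MDP: a deterministic transition function `step`, a set of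
terminal states, and a reward collected on each transition. -/
structure DetMDP (S A : Type*) where
  step : S → A → S
  terminal : S → Prop
  r : S → A → ℝ

/-- The state reached after `n` steps from `s` when the (arbitrary) sequence of
actions `acts` is taken. -/
def DetMDP.path {S A : Type*} (M : DetMDP S A) (s : S) (acts : ℕ → A) : ℕ → S
  | 0 => s
  | n + 1 => M.step (M.path s acts n) (acts n)

/-- `Reaches M H sup s` holds iff there is a trajectory from `s`, using only
actions allowed by the support predicate `sup`, that ends at a terminal state
with (terminal) reward `H`. -/
inductive DetMDP.Reaches {S A : Type*} (M : DetMDP S A) (H : ℝ) (sup : S → A → Prop) : S → Prop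
  | base (s : S) (a : A) : sup s a → M.terminal (M.step s a) → M.r s a = H →
      M.Reaches H sup s
  | step (s : S) (a : A) : sup s a → ¬ M.terminal (M.step s a) →
      M.Reaches H sup (M.step s a) → M.Reaches H sup s

/-- Auxiliary relation: `s'` is a non-terminal successor of `s`. -/
def DetMDP.Rrel {S A : Type*} (M : DetMDP S A) : S → S → Prop :=
  fun s' s => (∃ a, s' = M.step s a) ∧ ¬ M.terminal s'

lemma DetMDP.acc_all {S A : Type*} (M : DetMDP S A)
    (hterm : ∀ s acts, ∃ n, M.terminal (M.path s acts n)) :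
    ∀ s, Acc (M.Rrel) s := by
  intro s
  by_contra hs
  have key : ∀ t : S, ¬ Acc (M.Rrel) t →
      ∃ (t' : S) (a : A), t' = M.step t a ∧ ¬ M.terminal t' ∧ ¬ Acc (M.Rrel) t' := by
    intro t ht
    by_contra hcon
    push_neg at hcon
    apply ht
    refine Acc.intro t (fun y hy => ?_)
    obtain ⟨⟨a, ha⟩, hnt⟩ := hy
    exact hcon y a ha hnt
  choose nxt act hstep hnt hnacc using key
  let F : ℕ → {t : S // ¬ Acc (M.Rrel) t} := fun n =>
    Nat.rec ⟨s, hs⟩ (fun _ p => ⟨nxt p.1 p.2, hnacc p.1 p.2⟩) n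
  have hF : ∀ n, (F (n + 1)).1 = M.step (F n).1 (act (F n).1 (F n).2) :=
    fun n => hstep (F n).1 (F n).2
  have hFnt : ∀ n, ¬ M.terminal (F (n + 1)).1 := fun n => hnt (F n).1 (F n).2
  set acts : ℕ → A := fun n => act (F (n + 1)).1 (F (n + 1)).2 with hacts
  have hpath : ∀ n, M.path (F 1).1 acts n = (F (n + 1)).1 := by
    intro n
    induction n with
    | zero => rfl
    | succ k ih =>
      show M.step (M.path (F 1).1 acts k) (acts k) = _
      rw [ih, hF (k + 1)]
  obtain ⟨n, hn⟩ := hterm (F 1).1 acts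
  rw [hpath n] at hn
  exact hFnt n hn

/-- One step of policy improvement on the exact behavior value function is optimal:
in a deterministic MDP with `γ = 1`, finite trajectories, zero non-terminal rewards
and terminal rewards in `{L, H}` with `L < H`, if the behavior policy `πB` reaches
reward `H` with positive probability from every state in `S` (the set of states from
which `H` is reachable), then the greedy policy `π(s) = argmax_a Q^{πB}(s,a)`
reaches reward `H` with probability 1 — i.e. its unique trajectory achieves `H` —
from every state in `S`. -/
theorem stmt_0 {S A : Type*} [Fintype A] [Nonempty A] (M : DetMDP S A)
    (L H : ℝ) (hLH : L < H)
    -- every trajectory terminates in finitely many steps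
    (hterm : ∀ s acts, ∃ n, M.terminal (M.path s acts n))
    -- zero reward on non-terminal transitions
    (hr0 : ∀ s a, ¬ M.terminal (M.step s a) → M.r s a = 0)
    -- terminal transitions have reward L or H
    (hrT : ∀ s a, M.terminal (M.step s a) → M.r s a = L ∨ M.r s a = H)
    -- the (stochastic) behavior policy
    (πB : S → A → ℝ)
    (hπB : ∀ s, (∀ a, 0 ≤ πB s a) ∧ ∑ a, πB s a = 1)
    -- Q is the exact (undiscounted) behavior value function: Bellman equations for πB
    (Q : S → A → ℝ)
    (hQ : ∀ s a, Q s a = M.r s a +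
      (if M.terminal (M.step s a) then 0
       else ∑ a', πB (M.step s a) a' * Q (M.step s a) a'))
    -- from every state from which H is reachable, πB reaches H with positive probability
    (hcover : ∀ s, M.Reaches H (fun _ _ => True) s → M.Reaches H (fun s' a => 0 < πB s' a) s)
    -- the greedy (one-step improved) policy
    (π : S → A) (hgreedy : ∀ s a, Q s a ≤ Q s (π s)) :
    ∀ s, M.Reaches H (fun _ _ => True) s → M.Reaches H (fun s' a => a = π s') s := by
  classical
  have hw : WellFounded (M.Rrel) := ⟨M.acc_all hterm⟩
  -- bounds: L ≤ Q s a ≤ H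
  have hbound : ∀ s a, L ≤ Q s a ∧ Q s a ≤ H := by
    intro s
    induction s using hw.induction with
    | _ s ih =>
      intro a
      rw [hQ s a]
      by_cases ht : M.terminal (M.step s a)
      · simp only [ht, if_true, add_zero]
        rcases hrT s a ht with h | h <;> simp [h, hLH.le]
      · simp only [ht, if_false, hr0 s a ht, zero_add]
        have hs' : M.Rrel (M.step s a) s := ⟨⟨a, rfl⟩, ht⟩
        set s' := M.step s a with hs'def
        have hL : (∑ a', πB s' a' * L) ≤ ∑ a', πB s' a' * Q s' a' :=
          Finset.sum_le_sum fun a' _ =>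
            mul_le_mul_of_nonneg_left (ih s' hs' a').1 ((hπB s').1 a')
        have hH : (∑ a', πB s' a' * Q s' a') ≤ ∑ a', πB s' a' * H :=
          Finset.sum_le_sum fun a' _ =>
            mul_le_mul_of_nonneg_left (ih s' hs' a').2 ((hπB s').1 a')
        have e1 : (∑ a', πB s' a' * L) = L := by
          rw [← Finset.sum_mul, (hπB s').2, one_mul]
        have e2 : (∑ a', πB s' a' * H) = H := by
          rw [← Finset.sum_mul, (hπB s').2, one_mul]
        exact ⟨e1 ▸ hL, e2 ▸ hH⟩
  -- the value function is at most the greedy Q-value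
  have hVle : ∀ s, (∑ a, πB s a * Q s a) ≤ Q s (π s) := by
    intro s
    calc (∑ a, πB s a * Q s a) ≤ ∑ a, πB s a * Q s (π s) :=
          Finset.sum_le_sum fun a _ =>
            mul_le_mul_of_nonneg_left (hgreedy s a) ((hπB s).1 a)
      _ = Q s (π s) := by rw [← Finset.sum_mul, (hπB s).2, one_mul]
  -- if πB reaches H with positive probability from s, then L < V(s)
  have hB : ∀ s, M.Reaches H (fun s' a => 0 < πB s' a) s →
      L < ∑ a, πB s a * Q s a := by
    intro s hr
    induction hr with
    | base t a hpa hta hra =>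
      have hQa : Q t a = H := by rw [hQ t a]; simp [hta, hra]
      have : (∑ a', πB t a' * L) < ∑ a', πB t a' * Q t a' := by
        refine Finset.sum_lt_sum (fun a' _ =>
          mul_le_mul_of_nonneg_left (hbound t a').1 ((hπB t).1 a')) ⟨a, Finset.mem_univ a, ?_⟩
        rw [hQa]
        exact mul_lt_mul_of_pos_left hLH hpa
      calc L = ∑ a', πB t a' * L := by rw [← Finset.sum_mul, (hπB t).2, one_mul]
        _ < _ := this
    | step t a hpa hnt _ ih =>
      have hQa : L < Q t a := by
        rw [hQ t a]
        simp only [hnt, if_false, hr0 t a hnt, zero_add]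
        exact ih
      have : (∑ a', πB t a' * L) < ∑ a', πB t a' * Q t a' := by
        refine Finset.sum_lt_sum (fun a' _ =>
          mul_le_mul_of_nonneg_left (hbound t a').1 ((hπB t).1 a')) ⟨a, Finset.mem_univ a, ?_⟩
        exact mul_lt_mul_of_pos_left hQa hpa
      calc L = ∑ a', πB t a' * L := by rw [← Finset.sum_mul, (hπB t).2, one_mul]
        _ < _ := this
  -- if L < Q s (π s) then the greedy policy reaches H from s
  have hC : ∀ s, L < Q s (π s) → M.Reaches H (fun s' a => a = π s') s := by
    intro s
    induction s using hw.induction with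
    | _ s ih =>
      intro hQs
      by_cases ht : M.terminal (M.step s (π s))
      · have hq : Q s (π s) = M.r s (π s) := by rw [hQ]; simp [ht]
        rcases hrT s (π s) ht with h | h
        · exfalso; rw [hq, h] at hQs; exact lt_irrefl _ hQs
        · exact .base s (π s) rfl ht h
      · have hq : Q s (π s) =
            ∑ a', πB (M.step s (π s)) a' * Q (M.step s (π s)) a' := by
          rw [hQ]; simp [ht, hr0 s (π s) ht]
        have hs' : M.Rrel (M.step s (π s)) s := ⟨⟨π s, rfl⟩, ht⟩
        have hlt : L < Q (M.step s (π s)) (π (M.step s (π s))) :=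
          lt_of_lt_of_le (hq ▸ hQs) (hVle _)
        exact .step s (π s) rfl ht (ih _ hs' hlt)
  intro s hreach
  exact hC s (lt_of_lt_of_le (hB s (hcover s hreach)) (hVle s))
end

section
/- In the chain MDP with n ≥ 2 states, discount γ ∈ (0,1), actions {left, right} with deterministic moves along the chain (staying in place at the endpoints for the outward action), reward 1 for both transitions out of the rightmost state and 0 elsewhere, the value function V of the uniformly random policy is strictly monotonically increasing in the state index: V_1 < V_2 < ⋯ < V_n. -/
open Matrix

/-- The state-transition matrix of the uniformly random policy in the chain MDP on
states `0,…,n−1`: from state `i`, move left to `i−1` (staying at `0`) or right to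
`i+1` (staying at `n−1`), each with probability `1/2`. -/
noncomputable def chainP (n : ℕ) : Matrix (Fin n) (Fin n) ℝ := fun i j =>
  (if j.val = min (i.val + 1) (n - 1) then (1 : ℝ) / 2 else 0) +
  (if j.val = i.val - 1 then (1 : ℝ) / 2 else 0)

/-- The reward vector of the chain MDP: reward `1` on any transition out of the
rightmost state and `0` otherwise. -/
noncomputable def chainR (n : ℕ) : Fin n → ℝ := fun i => if i.val = n - 1 then 1 else 0

private lemma sum_if_val {n a : ℕ} (ha : a < n) (g : Fin n → ℝ) :
    ∑ j : Fin n, (if j.val = a then g j else 0) = g ⟨a, ha⟩ := by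
  rw [Finset.sum_eq_single ⟨a, ha⟩]
  · simp
  · intro b _ hb
    have : b.val ≠ a := fun h => hb (Fin.ext h)
    simp [this]
  · simp

private lemma chain_row (n : ℕ) (hn : 2 ≤ n) (γ : ℝ) (V : Fin n → ℝ)
    (hV : ((1 : Matrix (Fin n) (Fin n) ℝ) - γ • chainP n) *ᵥ V = chainR n)
    (k : ℕ) (hk : k < n) :
    V ⟨k, hk⟩ - γ/2 * V ⟨min (k+1) (n-1), by omega⟩ - γ/2 * V ⟨k-1, by omega⟩
      = (if k = n-1 then 1 else 0) := by
  have h1 : min (k+1) (n-1) < n := by omega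
  have h2 : k - 1 < n := by omega
  have h := congrFun hV ⟨k, hk⟩
  simp only [Matrix.mulVec, dotProduct, Matrix.sub_apply, Matrix.smul_apply, Matrix.one_apply,
    smul_eq_mul, chainP, chainR] at h
  have hc : ∀ j : Fin n,
      ((if (⟨k,hk⟩ : Fin n) = j then (1:ℝ) else 0) -
        γ * ((if j.val = min (k+1) (n-1) then (1:ℝ)/2 else 0) + (if j.val = k - 1 then (1:ℝ)/2 else 0))) * V j
      = (if j.val = k then V j else 0) - γ/2 * (if j.val = min (k+1) (n-1) then V j else 0)
          - γ/2 * (if j.val = k-1 then V j else 0) := by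
    intro j
    have h3 : (if (⟨k,hk⟩ : Fin n) = j then (1:ℝ) else 0) = (if j.val = k then 1 else 0) :=
      if_congr (by simp [Fin.ext_iff, eq_comm]) rfl rfl
    rw [h3]
    split <;> split <;> split <;> ring
  rw [Finset.sum_congr rfl (fun j _ => hc j)] at h
  rw [Finset.sum_sub_distrib, Finset.sum_sub_distrib, ← Finset.mul_sum, ← Finset.mul_sum,
    sum_if_val hk, sum_if_val h1, sum_if_val h2] at h
  simpa using h

/-- In the chain MDP with `n ≥ 2` states and discount `γ ∈ (0,1)`, the value
function `V` of the uniformly random policy — the solution of `(I − γP)V = R` —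
is strictly increasing in the state index. -/
theorem stmt_1 (n : ℕ) (hn : 2 ≤ n) (γ : ℝ) (hγ0 : 0 < γ) (hγ1 : γ < 1)
    (V : Fin n → ℝ)
    (hV : ((1 : Matrix (Fin n) (Fin n) ℝ) - γ • chainP n) *ᵥ V = chainR n) :
    StrictMono V := by
  classical
  set f : ℕ → ℝ := fun k => if h : k < n then V ⟨k, h⟩ else 0 with hf
  have hfv : ∀ k (hk : k < n), f k = V ⟨k, hk⟩ := fun k hk => dif_pos hk
  -- row equations in terms of f
  have hrow : ∀ k, k < n → f k - γ/2 * f (min (k+1) (n-1)) - γ/2 * f (k-1)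
      = (if k = n-1 then 1 else 0) := by
    intro k hk
    rw [hfv k hk, hfv (min (k+1) (n-1)) (by omega), hfv (k-1) (by omega)]
    exact chain_row n hn γ V hV k hk
  have e0 : f 0 - γ/2 * f 1 - γ/2 * f 0 = 0 := by
    have := hrow 0 (by omega)
    rw [if_neg (by omega)] at this
    have hm : min (0+1) (n-1) = 1 := by omega
    simpa [hm] using this
  have eInt : ∀ k, 0 < k → k < n - 1 → f k - γ/2 * f (k+1) - γ/2 * f (k-1) = 0 := by
    intro k hk0 hk1
    have := hrow k (by omega)
    rw [if_neg (by omega)] at this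
    have hm : min (k+1) (n-1) = k+1 := by omega
    rwa [hm] at this
  have eLast : f (n-1) - γ/2 * f (n-1) - γ/2 * f (n-2) = 1 := by
    have := hrow (n-1) (by omega)
    rw [if_pos rfl] at this
    have hm : min (n-1+1) (n-1) = n-1 := by omega
    have hm2 : n - 1 - 1 = n - 2 := by omega
    rwa [hm, hm2] at this
  -- base case: f 0 < f 1 (and hence 0 < f 0)
  have hbase : f 0 < f 1 := by
    by_contra hneg
    push_neg at hneg
    have hf0 : f 0 ≤ 0 := by nlinarith
    have hdesc : ∀ i, i ≤ n - 2 → f i ≤ 0 ∧ f (i+1) ≤ f i := by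
      intro i
      induction i with
      | zero => intro _; exact ⟨hf0, hneg⟩
      | succ i ih =>
        intro hi
        obtain ⟨h1, h2⟩ := ih (by omega)
        have he := eInt (i+1) (by omega) (by omega)
        simp only [Nat.add_sub_cancel] at he
        constructor
        · linarith
        · nlinarith
    obtain ⟨h1, h2⟩ := hdesc (n-2) (le_refl _)
    have hnn : n - 2 + 1 = n - 1 := by omega
    rw [hnn] at h2
    nlinarith
  have hf0pos : 0 < f 0 := by nlinarith
  -- ascending induction
  have hasc : ∀ i, i ≤ n - 2 → 0 < f i ∧ f i < f (i+1) := by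
    intro i
    induction i with
    | zero => intro _; exact ⟨hf0pos, hbase⟩
    | succ i ih =>
      intro hi
      obtain ⟨h1, h2⟩ := ih (by omega)
      have he := eInt (i+1) (by omega) (by omega)
      simp only [Nat.add_sub_cancel] at he
      constructor
      · linarith
      · nlinarith
  have hstep : ∀ k, k + 1 < n → f k < f (k+1) := by
    intro k hk
    exact (hasc k (by omega)).2
  -- strict monotonicity on valid indices
  have hmono : ∀ b, b < n → ∀ a, a < b → f a < f b := by
    intro b
    induction b with
    | zero => intro _ a ha; omega
    | succ b ih =>
      intro hb a ha
      rcases Nat.lt_or_ge a b with h | h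
      · exact lt_trans (ih (by omega) a h) (hstep b hb)
      · have : a = b := by omega
        subst this
        exact hstep a hb
  intro i j hij
  rw [← hfv i.val i.isLt, ← hfv j.val j.isLt]
  exact hmono j.val j.isLt i.val hij
end

section
/- Let γ ∈ (0,1) and let V ∈ ℝ^n (n ≥ 2) satisfy: (1−½γ)V_1 − ½γ V_2 = 0; −½γ V_{k−1} + V_k − ½γ V_{k+1} = 0 for 2 ≤ k ≤ n−1; and −½γ V_{n−1} + (1−½γ)V_n = 1. Then V_k > 0 for all k, and V is strictly increasing: V_k < V_{k+1} for all 1 ≤ k ≤ n−1. -/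
/-- Linear-algebraic core of the chain-MDP monotonicity result: if `γ ∈ (0,1)` and
`V₁,…,V_n` (indexed `1,…,n`, `n ≥ 2`) satisfy the tridiagonal system
`(1−½γ)V₁ − ½γV₂ = 0`, `−½γV_{k−1} + V_k − ½γV_{k+1} = 0` for `2 ≤ k ≤ n−1`, and
`−½γV_{n−1} + (1−½γ)V_n = 1`, then all `V_k > 0` and `V` is strictly increasing. -/
theorem stmt_2 (n : ℕ) (hn : 2 ≤ n) (γ : ℝ) (hγ0 : 0 < γ) (hγ1 : γ < 1)
    (V : ℕ → ℝ)
    (h1 : (1 - γ / 2) * V 1 - γ / 2 * V 2 = 0)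
    (hmid : ∀ k, 2 ≤ k → k ≤ n - 1 → -(γ / 2) * V (k - 1) + V k - γ / 2 * V (k + 1) = 0)
    (hend : -(γ / 2) * V (n - 1) + (1 - γ / 2) * V n = 1) :
    (∀ k, 1 ≤ k → k ≤ n → 0 < V k) ∧
    (∀ k, 1 ≤ k → k ≤ n - 1 → V k < V (k + 1)) := by
  -- First show V 1 > 0
  have hV1 : 0 < V 1 := by
    by_contra h
    push_neg at h
    -- if V 1 ≤ 0 then V is nonincreasing and nonpositive
    have A : ∀ k, 1 ≤ k → k ≤ n - 1 → V (k + 1) ≤ V k ∧ V k ≤ 0 := by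
      intro k hk1
      induction k, hk1 using Nat.le_induction with
      | base =>
        intro _
        constructor
        · nlinarith
        · exact h
      | succ k hk ih =>
        intro hkn
        have hk' : k ≤ n - 1 := le_trans (Nat.le_succ k) hkn
        obtain ⟨ih1, ih2⟩ := ih hk'
        have hm := hmid (k + 1) (by omega) hkn
        have hs : (k + 1) - 1 = k := by omega
        rw [hs] at hm
        constructor
        · nlinarith
        · linarith
    have hA := A (n - 1) (by omega) (le_refl _)
    have hs : (n - 1) + 1 = n := by omega
    rw [hs] at hA
    obtain ⟨hA1, hA2⟩ := hA
    nlinarith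
  -- Main induction: positivity and strict increase up to n-1
  have B : ∀ k, 1 ≤ k → k ≤ n - 1 → 0 < V k ∧ V k < V (k + 1) := by
    intro k hk1
    induction k, hk1 using Nat.le_induction with
    | base =>
      intro _
      refine ⟨hV1, ?_⟩
      nlinarith
    | succ k hk ih =>
      intro hkn
      have hk' : k ≤ n - 1 := le_trans (Nat.le_succ k) hkn
      obtain ⟨ih1, ih2⟩ := ih hk'
      have hm := hmid (k + 1) (by omega) hkn
      have hs : (k + 1) - 1 = k := by omega
      rw [hs] at hm
      constructor
      · linarith
      · nlinarith
  constructor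
  · intro k hk1 hkn
    rcases eq_or_lt_of_le hkn with hkeq | hklt
    · subst hkeq
      have hB := B (k - 1) (by omega) (le_refl _)
      have hs : (k - 1) + 1 = k := by omega
      rw [hs] at hB
      linarith [hB.1, hB.2]
    · exact (B k hk1 (by omega)).1
  · intro k hk1 hkn
    exact (B k hk1 hkn).2
end
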